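/- For every typing environment Γ and indices i, n, the branches of the expansion of Γ to n sessions equal the union over branches Γ' of Γ of the branches of the expansions of Γ': ⋃_{Γ' ∈ branches(Γ)} branches([Γ']_i^n) = branches([Γ]_i^n). -/
import Mathlib


namespace Protocol

inductive Label : Type
  | LL | HL | HH
deriving DecidableEq

inductive Mult : Type
  | one | inf
deriving DecidableEq

/-- Names (and variables): either an unindexed atom m, or an indexed copy
m_j of m for session j. -/
inductive Name : Type
  | base : ℕ → Name
  | idx : ℕ → ℕ → Name
deriving DecidableEq

/-- Types: labels, pairs, key types, symmetric/asymmetric encryption types,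
refinement types ⟦τ_m^{l,a} ; τ_n^{l',a}⟧ and union types. -/
inductive Ty : Type
  | lab : Label → Ty
  | prod : Ty → Ty → Ty
  | keyT : Label → Ty → Ty
  | encT : Ty → ℕ → Ty
  | aencT : Ty → ℕ → Ty
  | refin : Label → Label → Mult → Name → Name → Ty
  | union : Ty → Ty → Ty

/-- The branches of a type: the set of its non-union disjuncts. -/
def branches : Ty → Set Ty
  | .union T T' => branches T ∪ branches T'
  | T => {T}

/-- The j-indexed copy of a name. -/
def reindex (m : Name) (j : ℕ) : Name :=
  match m with
  | .base b => .idx b j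
  | .idx b _ => .idx b j

/-- ⋁_{j=1}^{n} f j (degenerate at n = 0). -/
def bigOr : ℕ → (ℕ → Ty) → Ty
  | 0, f => f 0
  | 1, f => f 1
  | (n + 2), f => .union (bigOr (n + 1) f) (f (n + 2))

/-- Expansion of a type to n sessions: homomorphic on all constructors,
except that an infinite refinement ⟦τ_m^{l,∞} ; τ_p^{l',∞}⟧ expands to the
n-fold union ⋁_{j=1}^{n} ⟦τ_{m_j}^{l,1} ; τ_{p_j}^{l',1}⟧. -/
def expand (n : ℕ) : Ty → Ty
  | .lab l => .lab l
  | .prod T T' => .prod (expand n T) (expand n T')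
  | .keyT l T => .keyT l (expand n T)
  | .encT T k => .encT (expand n T) k
  | .aencT T k => .aencT (expand n T) k
  | .union T T' => .union (expand n T) (expand n T')
  | .refin l l' Mult.one m p => .refin l l' Mult.one m p
  | .refin l l' Mult.inf m p =>
      bigOr n (fun j => .refin l l' Mult.one (reindex m j) (reindex p j))

/-- A typing environment: nonces are mapped to nonce types τ_m^{l,a}
(a label and a multiplicity), keys and variables to types. -/
structure Env : Type where
  nonce : Name → Option (Label × Mult)
  keyE : ℕ → Option Ty
  varE : Name → Option Ty

/-- o' is a branch of o (as optional types). -/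
def OptBranch (o' o : Option Ty) : Prop :=
  (o = none ∧ o' = none) ∨ ∃ T T', o = some T ∧ o' = some T' ∧ T' ∈ branches T

/-- The branches of an environment: all environments with the same domain
choosing, for each atom, a branch of its type. -/
def branchesEnv (Γ : Env) : Set Env :=
  {Γ' | Γ'.nonce = Γ.nonce ∧ (∀ k, OptBranch (Γ'.keyE k) (Γ.keyE k)) ∧
        (∀ x, OptBranch (Γ'.varE x) (Γ.varE x))}

/-- The expansion [Γ]_i^n of an environment to n sessions, renamed for
session i: each variable x becomes x_i with type [Γ(x)]^n, each key keeps
its (expanded) type, each nonce m of finite type keeps its type, and each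
nonce m of infinite type becomes m_i with the corresponding finite type. -/
def expandEnv (Γ : Env) (i n : ℕ) : Env where
  nonce := fun
    | .base m =>
        match Γ.nonce (.base m) with
        | some (l, Mult.one) => some (l, Mult.one)
        | _ => none
    | .idx m j =>
        if j = i then
          match Γ.nonce (.base m) with
          | some (l, Mult.inf) => some (l, Mult.one)
          | _ => none
        else none
  keyE := fun k => (Γ.keyE k).map (expand n)
  varE := fun
    | .base _ => none
    | .idx x j => if j = i then (Γ.varE (.base x)).map (expand n) else none


/-- Pick some branch of a type. -/
def pick : Ty → Ty
  | .union A _ => pick A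
  | .lab l => .lab l
  | .prod A B => .prod A B
  | .keyT l T => .keyT l T
  | .encT T k => .encT T k
  | .aencT T k => .aencT T k
  | .refin l l' a m p => .refin l l' a m p

lemma pick_mem (T : Ty) : pick T ∈ branches T := by
  induction T with
  | union A B ihA ihB => exact Or.inl ihA
  | _ => exact rfl

lemma branches_expand_aux (n : ℕ) (T : Ty) (h : branches T = {T}) :
    branches (expand n T) = ⋃ T' ∈ branches T, branches (expand n T') := by
  rw [h, Set.biUnion_singleton]

/-- branches of an expansion are the union of branches of expansions of branches. -/
lemma branches_expand (n : ℕ) (T : Ty) :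
    branches (expand n T) = ⋃ T' ∈ branches T, branches (expand n T') := by
  induction T with
  | union A B ihA ihB =>
      show branches (expand n A) ∪ branches (expand n B) = _
      rw [ihA, ihB]
      show _ = ⋃ T' ∈ (branches A ∪ branches B), branches (expand n T')
      rw [Set.biUnion_union]
  | _ => exact branches_expand_aux n _ rfl

lemma optBranch_trans {n : ℕ} {o m o' : Option Ty}
    (h1 : OptBranch m o) (h2 : OptBranch o' (m.map (expand n))) :
    OptBranch o' (o.map (expand n)) := by
  rcases h1 with ⟨ho, hm⟩ | ⟨T, T', ho, hm, hTT⟩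
  · subst ho hm; simpa using h2
  · subst ho hm
    rcases h2 with ⟨h, _⟩ | ⟨S, S', hS, hS', hSS⟩
    · simp at h
    · simp only [Option.map_some, Option.some.injEq] at hS
      subst hS
      refine Or.inr ⟨expand n T, S', rfl, hS', ?_⟩
      have hsub : branches (expand n T') ⊆ branches (expand n T) := by
        rw [branches_expand n T]
        exact Set.subset_biUnion_of_mem (u := fun U => branches (expand n U)) hTT
      exact hsub hSS

-- Choose an intermediate branch.
open Classical in
noncomputable def mid (n : ℕ) : Option Ty → Option Ty → Option Ty
  | some T, some S =>
      if h : ∃ T' ∈ branches T, S ∈ branches (expand n T') then some h.choose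
      else some (pick T)
  | some T, none => some (pick T)
  | none, _ => none

lemma mid_branch (n : ℕ) (o oS : Option Ty) : OptBranch (mid n o oS) o := by
  match o, oS with
  | none, _ => exact Or.inl ⟨rfl, rfl⟩
  | some T, none => exact Or.inr ⟨T, pick T, rfl, rfl, pick_mem T⟩
  | some T, some S =>
      by_cases h : ∃ T' ∈ branches T, S ∈ branches (expand n T')
      · refine Or.inr ⟨T, h.choose, rfl, ?_, h.choose_spec.1⟩
        simp only [mid]
        rw [dif_pos h]
      · refine Or.inr ⟨T, pick T, rfl, ?_, pick_mem T⟩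
        simp only [mid]
        rw [dif_neg h]

lemma mid_spec {n : ℕ} {o oS : Option Ty} (h : OptBranch oS (o.map (expand n))) :
    OptBranch oS ((mid n o oS).map (expand n)) := by
  match o, oS with
  | none, _ =>
      rcases h with ⟨_, h2⟩ | ⟨T, T', hT, _, _⟩
      · exact Or.inl ⟨rfl, h2⟩
      · simp at hT
  | some T, none =>
      rcases h with ⟨h1, _⟩ | ⟨_, _, _, h, _⟩
      · simp at h1
      · simp at h
  | some T, some S =>
      rcases h with ⟨_, h2⟩ | ⟨E, S', hE, hS', hmem⟩
      · simp at h2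
      · simp only [Option.map_some, Option.some.injEq] at hE hS'
        subst hE; subst hS'
        rw [branches_expand] at hmem
        simp only [Set.mem_iUnion, exists_prop] at hmem
        obtain ⟨T', hT', hS⟩ := hmem
        have hex : ∃ T' ∈ branches T, S ∈ branches (expand n T') := ⟨T', hT', hS⟩
        refine Or.inr ⟨expand n hex.choose, S, ?_, rfl, hex.choose_spec.2⟩
        simp only [mid]
        rw [dif_pos hex]
        rfl

/-- The intermediate environment witness. -/
noncomputable def midEnv (Γ Δ : Env) (i n : ℕ) : Env where
  nonce := Γ.nonce
  keyE := fun k => mid n (Γ.keyE k) (Δ.keyE k)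
  varE := fun x =>
    match x with
    | .base b => mid n (Γ.varE (.base b)) (Δ.varE (.idx b i))
    | .idx b j => mid n (Γ.varE (.idx b j)) none

/-- branches of the expansion of an environment equal the
union, over the branches of the environment, of the branches of their
expansions. -/
theorem branchesEnv_expand (Γ : Env) (i n : ℕ) :
    (⋃ Γ' ∈ branchesEnv Γ, branchesEnv (expandEnv Γ' i n)) =
      branchesEnv (expandEnv Γ i n) := by
  ext Δ
  simp only [Set.mem_iUnion, exists_prop]
  constructor
  · rintro ⟨Γ', ⟨hn, hk, hv⟩, ⟨hn', hk', hv'⟩⟩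
    refine ⟨?_, ?_, ?_⟩
    · rw [hn']
      funext x
      cases x with
      | base m => simp [expandEnv, hn]
      | idx m j => simp [expandEnv, hn]
    · intro k
      exact optBranch_trans (hk k) (hk' k)
    · intro x
      cases x with
      | base b => simpa [expandEnv] using hv' (.base b)
      | idx b j =>
          by_cases hj : j = i
          · subst hj
            have h1 := hv (.base b)
            have h2 := hv' (.idx b j)
            simp only [expandEnv, if_pos rfl] at h2 ⊢
            exact optBranch_trans h1 h2
          · simpa [expandEnv, hj] using hv' (.idx b j)
  · rintro ⟨hn, hk, hv⟩
    refine ⟨midEnv Γ Δ i n, ⟨rfl, fun k => mid_branch n _ _, fun x => ?_⟩,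
      ⟨?_, fun k => ?_, fun x => ?_⟩⟩
    · cases x with
      | base b => exact mid_branch n _ _
      | idx b j => exact mid_branch n _ _
    · exact hn
    · exact mid_spec (hk k)
    · cases x with
      | base b => simpa [expandEnv] using hv (.base b)
      | idx b j =>
          by_cases hj : j = i
          · subst hj
            have h := hv (.idx b j)
            simp only [expandEnv, if_pos rfl] at h ⊢
            exact mid_spec h
          · simpa [expandEnv, hj] using hv (.idx b j)


end Protocol
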